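/- Let S and V be orthogonal finite-dimensional subspaces of H. The following are equivalent: (i) there exists a pair (X, Y) with X a positive operator on H satisfying P_S X = X P_S = X, Y a positive operator satisfying P_V Y = Y P_V = Y, tr(X) = tr(Y) = 1, and Diag(X) = Diag(Y); (ii) m_S ∩ m_V ≠ ∅; (iii) W({P_S E_i P_S}_{i∈ℕ}) ∩ W({P_V E_i P_V}_{i∈ℕ}) ≠ {0}. -/

import Mathlib

open scoped InnerProductSpace
open ContinuousLinearMap

noncomputable section

variable {H : Type*} [NormedAddCommGroup H] [InnerProductSpace ℂ H] [CompleteSpace H]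

/-- The orthogonal projection onto `S`, as an operator `H →L[ℂ] H`. -/
def projOp (S : Submodule ℂ H) [S.HasOrthogonalProjection] : H →L[ℂ] H :=
  S.subtypeL ∘L S.orthogonalProjectionOnto

/-- The diagonal of `T` with respect to the fixed orthonormal basis `e`. -/
def diagSeq (e : HilbertBasis ℕ ℂ H) (T : H →L[ℂ] H) : ℕ → ℝ :=
  fun i => (⟪T (e i), e i⟫_ℂ).re

/-- The (diagonal) trace of `T` with respect to the fixed orthonormal basis `e`. -/
def diagTr (e : HilbertBasis ℕ ℂ H) (T : H →L[ℂ] H) : ℝ :=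
  ∑' i, (⟪T (e i), e i⟫_ℂ).re

/-- `ρ` is a density operator: a positive trace-class operator with trace one.
(For positive operators, being trace class is equivalent to being compact with
summable diagonal in an orthonormal basis.) -/
def IsDensity (e : HilbertBasis ℕ ℂ H) (ρ : H →L[ℂ] H) : Prop :=
  IsCompactOperator ρ ∧ ρ.IsPositive ∧
    Summable (fun i => (⟪ρ (e i), e i⟫_ℂ).re) ∧ diagTr e ρ = 1

/-- `D_S`: the density operators supported in `S`, i.e. with `P_S Y = Y`. -/
def DOps (e : HilbertBasis ℕ ℂ H) (S : Submodule ℂ H) [S.HasOrthogonalProjection] :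
    Set (H →L[ℂ] H) :=
  {Y | IsDensity e Y ∧ projOp S ∘L Y = Y}

/-- The moment set `m_S = Diag(D_S)`. -/
def momentSet (e : HilbertBasis ℕ ℂ H) (S : Submodule ℂ H) [S.HasOrthogonalProjection] :
    Set (ℕ → ℝ) := diagSeq e '' DOps e S

/-- `|v|² = (|⟨v,e_i⟩|²)_i`. -/
def absSq (e : HilbertBasis ℕ ℂ H) (v : H) : ℕ → ℝ := fun i => ‖⟪e i, v⟫_ℂ‖ ^ 2

/-- `E_j = e_j ⊗ e_j`, the rank-one orthogonal projection onto `span{e_j}`. -/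
def Eproj (e : HilbertBasis ℕ ℂ H) (j : ℕ) : H →L[ℂ] H :=
  (innerSL ℂ (e j)).smulRight (e j)

/-- The joint numerical range of a sequence of operators. -/
def jnr (e : HilbertBasis ℕ ℂ H) (A : ℕ → (H →L[ℂ] H)) : Set (ℕ → ℝ) :=
  {w | ∃ ρ : H →L[ℂ] H, IsDensity e ρ ∧ ∀ j, w j = diagTr e (ρ ∘L A j)}

/-- The family `A_{S,E} = (P_S E_j P_S)_j`. -/
def ASE (e : HilbertBasis ℕ ℂ H) (S : Submodule ℂ H) [S.HasOrthogonalProjection] :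
    ℕ → (H →L[ℂ] H) := fun j => projOp S ∘L Eproj e j ∘L projOp S

namespace Stmt17Aux

variable (e : HilbertBasis ℕ ℂ H)

lemma inner_projOp (S : Submodule ℂ H) [S.HasOrthogonalProjection] (x y : H) :
    ⟪projOp S x, y⟫_ℂ = ⟪x, projOp S y⟫_ℂ :=
  Submodule.inner_starProjection_left_eq_right S x y

lemma projOp_idem_apply (S : Submodule ℂ H) [S.HasOrthogonalProjection] (x : H) :
    projOp S (projOp S x) = projOp S x := by
  simp [projOp, Submodule.orthogonalProjectionOnto_mem_subspace_eq_self]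
  exact Submodule.starProjection_eq_self_iff.mpr (S.orthogonalProjectionOnto x).2

lemma projOp_comp_projOp (S : Submodule ℂ H) [S.HasOrthogonalProjection] :
    projOp S ∘L projOp S = projOp S := by
  ext x
  exact projOp_idem_apply S x

lemma projOp_isSelfAdjoint (S : Submodule ℂ H) [CompleteSpace S] :
    IsSelfAdjoint (projOp S) := isSelfAdjoint_starProjection S

lemma projOp_mem (S : Submodule ℂ H) [S.HasOrthogonalProjection] (x : H) :
    projOp S x ∈ S := (S.orthogonalProjectionOnto x).2

lemma ASE_eq_rankOne (S : Submodule ℂ H) [S.HasOrthogonalProjection] (j : ℕ) :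
    ASE e S j = (innerSL ℂ (projOp S (e j))).smulRight (projOp S (e j)) := by
  ext x
  simp only [ASE, Eproj, coe_comp', Function.comp_apply, smulRight_apply, innerSL_apply_apply,
    map_smul]
  rw [← inner_projOp S (e j) x]

lemma diagTr_comp_rankOne (ρ : H →L[ℂ] H) (u : H) :
    diagTr e (ρ ∘L (innerSL ℂ u).smulRight u) = (⟪ρ u, u⟫_ℂ).re := by
  have h : ∀ i, ⟪(ρ ∘L (innerSL ℂ u).smulRight u) (e i), e i⟫_ℂ
      = ⟪ρ u, e i⟫_ℂ * ⟪e i, u⟫_ℂ := by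
    intro i
    simp only [coe_comp', Function.comp_apply, smulRight_apply, innerSL_apply_apply, map_smul,
      inner_smul_left]
    rw [inner_conj_symm]
    ring
  rw [diagTr]
  simp_rw [h]
  rw [← Complex.re_tsum (e.summable_inner_mul_inner (ρ u) u), e.tsum_inner_mul_inner]

lemma inner_conj_proj (S : Submodule ℂ H) [S.HasOrthogonalProjection] (T : H →L[ℂ] H) (x : H) :
    ⟪(projOp S ∘L T ∘L projOp S) x, x⟫_ℂ = ⟪T (projOp S x), projOp S x⟫_ℂ := by
  simp only [coe_comp', Function.comp_apply]
  rw [inner_projOp]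

lemma summable_diag_projOp (S : Submodule ℂ H) [FiniteDimensional ℂ S] :
    Summable (fun j => (⟪e j, projOp S (e j)⟫_ℂ).re) := by
  classical
  set b := stdOrthonormalBasis ℂ S with hb
  have hpt : ∀ j, (⟪e j, projOp S (e j)⟫_ℂ).re
      = ∑ k, (⟪((b k : S) : H), e j⟫_ℂ * ⟪e j, ((b k : S) : H)⟫_ℂ).re := by
    intro j
    have h0 : projOp S (e j) = ∑ k, ⟪((b k : S) : H), e j⟫_ℂ • ((b k : S) : H) := by
      have h1 := b.orthogonalProjectionOnto_apply_eq_sum (e j)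
      calc projOp S (e j) = ((S.orthogonalProjectionOnto (e j) : S) : H) := rfl
        _ = _ := by rw [h1]; push_cast; rfl
    rw [h0, inner_sum, Complex.re_sum]
    refine Finset.sum_congr rfl fun k _ => ?_
    rw [inner_smul_right]
  have heq : (fun j => (⟪e j, projOp S (e j)⟫_ℂ).re)
      = fun j => ∑ k, (⟪((b k : S) : H), e j⟫_ℂ * ⟪e j, ((b k : S) : H)⟫_ℂ).re := funext hpt
  rw [heq]
  exact summable_sum fun k _ => (Complex.hasSum_re (e.hasSum_inner_mul_inner _ _)).summable

lemma norm_projOp_sq (S : Submodule ℂ H) [S.HasOrthogonalProjection] (x : H) :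
    ‖projOp S x‖ ^ 2 = (⟪x, projOp S x⟫_ℂ).re := by
  have h : ⟪projOp S x, projOp S x⟫_ℂ = ⟪x, projOp S x⟫_ℂ := by
    rw [inner_projOp, projOp_idem_apply]
  calc ‖projOp S x‖ ^ 2 = (⟪projOp S x, projOp S x⟫_ℂ).re :=
        (inner_self_eq_norm_sq (𝕜 := ℂ) (projOp S x)).symm
    _ = (⟪x, projOp S x⟫_ℂ).re := by rw [h]

lemma summable_quad (S : Submodule ℂ H) [FiniteDimensional ℂ S] (ρ : H →L[ℂ] H) :
    Summable (fun j => (⟪ρ (projOp S (e j)), projOp S (e j)⟫_ℂ).re) := by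
  apply Summable.of_norm_bounded (g := fun j => ‖ρ‖ * (⟪e j, projOp S (e j)⟫_ℂ).re)
    ((summable_diag_projOp e S).mul_left ‖ρ‖)
  intro j
  set u := projOp S (e j) with hu
  have h1 : |(⟪ρ u, u⟫_ℂ).re| ≤ ‖ρ u‖ * ‖u‖ := by
    refine (Complex.abs_re_le_norm _).trans ?_
    exact norm_inner_le_norm _ _
  have h2 : ‖ρ u‖ * ‖u‖ ≤ ‖ρ‖ * ‖u‖ ^ 2 := by
    have := ρ.le_opNorm u
    have hn : (0:ℝ) ≤ ‖u‖ := norm_nonneg _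
    nlinarith
  rw [Real.norm_eq_abs]
  calc |(⟪ρ u, u⟫_ℂ).re| ≤ ‖ρ‖ * ‖u‖ ^ 2 := h1.trans h2
    _ = ‖ρ‖ * (⟪e j, projOp S (e j)⟫_ℂ).re := by rw [hu, norm_projOp_sq]

lemma isPositive_smul_real {T : H →L[ℂ] H} (hT : T.IsPositive) {c : ℝ} (hc : 0 ≤ c) :
    (((c : ℂ)) • T).IsPositive := by
  constructor
  · intro x y
    have hsym := hT.isSelfAdjoint.isSymmetric
    show ⟪((c : ℂ) • T) x, y⟫_ℂ = ⟪x, ((c : ℂ) • T) y⟫_ℂ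
    simp only [ContinuousLinearMap.smul_apply, inner_smul_left, inner_smul_right,
      Complex.conj_ofReal]
    exact congrArg (fun z => ((c : ℂ)) * z) (hsym x y)
  · intro x
    have h0 := hT.2 x
    rw [ContinuousLinearMap.reApplyInnerSelf_apply] at h0 ⊢
    have key : ⟪((c : ℂ) • T) x, x⟫_ℂ = (c : ℂ) * ⟪T x, x⟫_ℂ := by
      rw [ContinuousLinearMap.smul_apply, inner_smul_left, Complex.conj_ofReal]
    rw [key, RCLike.re_to_complex, Complex.mul_re]
    simp only [Complex.ofReal_re, Complex.ofReal_im, zero_mul, sub_zero]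
    rw [RCLike.re_to_complex] at h0
    exact mul_nonneg hc h0

lemma isCompactOperator_projOp (S : Submodule ℂ H) [FiniteDimensional ℂ S] :
    IsCompactOperator (projOp S) := by
  haveI : ProperSpace S := FiniteDimensional.proper ℂ S
  refine ⟨((↑) : S → H) '' Metric.closedBall 0 1,
    (isCompact_closedBall _ _).image continuous_subtype_val, ?_⟩
  refine Filter.mem_of_superset (Metric.closedBall_mem_nhds 0 one_pos) fun x hx => ?_
  refine ⟨S.orthogonalProjectionOnto x, ?_, rfl⟩
  simp only [Metric.mem_closedBall, dist_zero_right] at hx ⊢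
  calc ‖S.orthogonalProjectionOnto x‖ ≤ ‖(S.orthogonalProjectionOnto : H →L[ℂ] S)‖ * ‖x‖ :=
        (S.orthogonalProjectionOnto).le_opNorm x
    _ ≤ 1 * 1 := by
        have h1 := Submodule.orthogonalProjectionOnto_norm_le (K := S)
        have h2 : (0:ℝ) ≤ ‖x‖ := norm_nonneg _
        nlinarith [ (S.orthogonalProjectionOnto : H →L[ℂ] S).opNorm_nonneg ]
    _ = 1 := one_mul 1

lemma isCompactOperator_rankOne (v : H) :
    IsCompactOperator ((innerSL ℂ v).smulRight v) := by
  refine ⟨(fun c : ℂ => c • v) '' Metric.closedBall 0 ‖v‖,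
    (isCompact_closedBall _ _).image (continuous_id.smul continuous_const), ?_⟩
  refine Filter.mem_of_superset (Metric.closedBall_mem_nhds 0 one_pos) fun x hx => ?_
  refine ⟨⟪v, x⟫_ℂ, ?_, rfl⟩
  simp only [Metric.mem_closedBall, dist_zero_right] at hx ⊢
  have := norm_inner_le_norm (𝕜 := ℂ) v x
  nlinarith [norm_nonneg v]

lemma isDensity_rankOne (v : H) (hv : ‖v‖ = 1) :
    IsDensity e ((innerSL ℂ v).smulRight v) := by
  have hdiag : ∀ i, ⟪((innerSL ℂ v).smulRight v) (e i), e i⟫_ℂ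
      = ⟪v, e i⟫_ℂ * ⟪e i, v⟫_ℂ := by
    intro i
    simp only [smulRight_apply, innerSL_apply_apply, inner_smul_left]
    rw [inner_conj_symm]
    ring
  have hsummC := e.summable_inner_mul_inner v v
  have hsum : Summable (fun i => (⟪((innerSL ℂ v).smulRight v) (e i), e i⟫_ℂ).re) := by
    have : (fun i => (⟪((innerSL ℂ v).smulRight v) (e i), e i⟫_ℂ).re)
        = fun i => (⟪v, e i⟫_ℂ * ⟪e i, v⟫_ℂ).re := by
      funext i; rw [hdiag i]
    rw [this]
    exact (Complex.hasSum_re (e.hasSum_inner_mul_inner v v)).summable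
  refine ⟨isCompactOperator_rankOne v, ⟨?_, ?_⟩, hsum, ?_⟩
  · intro x y
    show ⟪((innerSL ℂ v).smulRight v) x, y⟫_ℂ = ⟪x, ((innerSL ℂ v).smulRight v) y⟫_ℂ
    simp only [smulRight_apply, innerSL_apply_apply, inner_smul_left, inner_smul_right]
    rw [inner_conj_symm]
    ring
  · intro x
    rw [ContinuousLinearMap.reApplyInnerSelf_apply, smulRight_apply, innerSL_apply_apply,
      inner_smul_left, mul_comm, Complex.mul_conj, RCLike.re_to_complex]
    simp [Complex.normSq_nonneg]
  · rw [diagTr]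
    have h1 : (fun i => (⟪((innerSL ℂ v).smulRight v) (e i), e i⟫_ℂ).re)
        = fun i => (⟪v, e i⟫_ℂ * ⟪e i, v⟫_ℂ).re := by
      funext i; rw [hdiag i]
    rw [h1, ← Complex.re_tsum hsummC, e.tsum_inner_mul_inner,
      inner_self_eq_norm_sq_to_K, hv]
    norm_num

lemma quad_eq {S : Submodule ℂ H} [S.HasOrthogonalProjection] {X : H →L[ℂ] H}
    (hPX : projOp S ∘L X = X) (hXP : X ∘L projOp S = X) (x : H) :
    ⟪X (projOp S x), projOp S x⟫_ℂ = ⟪X x, x⟫_ℂ := by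
  have hfull : projOp S ∘L X ∘L projOp S = X := by rw [hXP, hPX]
  conv_rhs => rw [← hfull]
  rw [inner_conj_proj]

lemma comp_projOp_eq {S : Submodule ℂ H} [CompleteSpace S] {X : H →L[ℂ] H}
    (hsa : IsSelfAdjoint X) (hPX : projOp S ∘L X = X) : X ∘L projOp S = X := by
  have h := congrArg ContinuousLinearMap.adjoint hPX
  rwa [ContinuousLinearMap.adjoint_comp, hsa.adjoint_eq,
    (projOp_isSelfAdjoint S).adjoint_eq] at h

lemma mem_DOps_of {S : Submodule ℂ H} [FiniteDimensional ℂ S] {X : H →L[ℂ] H}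
    (hX : X.IsPositive) (hPX : projOp S ∘L X = X) (hXP : X ∘L projOp S = X)
    (htr : diagTr e X = 1) : X ∈ DOps e S := by
  have hcomp : IsCompactOperator X := by
    have h := (isCompactOperator_projOp S).comp_clm X
    rw [← coe_comp', hPX] at h
    exact h
  have hsummable : Summable (fun i => (⟪X (e i), e i⟫_ℂ).re) := by
    have h : (fun i => (⟪X (e i), e i⟫_ℂ).re)
        = fun i => (⟪X (projOp S (e i)), projOp S (e i)⟫_ℂ).re := by
      funext i
      rw [quad_eq hPX hXP]
    rw [h]
    exact summable_quad e S X
  exact ⟨⟨hcomp, hX, hsummable, htr⟩, hPX⟩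

lemma mem_jnr_of_DOps {S : Submodule ℂ H} [FiniteDimensional ℂ S] {X : H →L[ℂ] H}
    (hX : X ∈ DOps e S) : diagSeq e X ∈ jnr e (ASE e S) := by
  obtain ⟨hden, hPX⟩ := hX
  have hXP : X ∘L projOp S = X := comp_projOp_eq hden.2.1.isSelfAdjoint hPX
  refine ⟨X, hden, fun j => ?_⟩
  rw [ASE_eq_rankOne, diagTr_comp_rankOne, diagSeq]
  exact congrArg Complex.re (quad_eq hPX hXP (e j)).symm

lemma tsum_diagSeq (X : H →L[ℂ] H) : diagTr e X = ∑' i, diagSeq e X i := rfl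

include e in
lemma exists_unit_perp (K : Submodule ℂ H) [FiniteDimensional ℂ K] :
    ∃ v : H, ‖v‖ = 1 ∧ ∀ u ∈ K, ⟪v, u⟫_ℂ = 0 := by
  have hK : Kᗮ ≠ ⊥ := by
    intro h
    rw [Submodule.orthogonal_eq_bot_iff] at h
    have hfd : FiniteDimensional ℂ H := by
      have : FiniteDimensional ℂ K := inferInstance
      rw [h] at this
      exact (Submodule.topEquiv (R := ℂ) (M := H)).finiteDimensional
    have hli := (HilbertBasis.orthonormal e).linearIndependent
    haveI := hli.finite
    exact not_finite ℕ
  obtain ⟨x, hxmem, hx0⟩ := Submodule.ne_bot_iff _ |>.mp hK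
  have hxn : ‖x‖ ≠ 0 := norm_ne_zero_iff.mpr hx0
  refine ⟨((‖x‖⁻¹ : ℝ) : ℂ) • x, ?_, fun u hu => ?_⟩
  · rw [norm_smul, Complex.norm_real, Real.norm_eq_abs, abs_of_nonneg (by positivity),
      inv_mul_cancel₀ hxn]
  · rw [inner_smul_left]
    have h : ⟪x, u⟫_ℂ = 0 := by
      have h2 := (Submodule.mem_orthogonal K x).mp hxmem u hu
      rw [← inner_conj_symm, h2, map_zero]
    rw [h, mul_zero]

lemma zero_mem_jnr {S : Submodule ℂ H} [FiniteDimensional ℂ S] {v : H}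
    (hv : ‖v‖ = 1) (hperp : ∀ u ∈ S, ⟪v, u⟫_ℂ = 0) :
    (0 : ℕ → ℝ) ∈ jnr e (ASE e S) := by
  refine ⟨(innerSL ℂ v).smulRight v, isDensity_rankOne e v hv, fun j => ?_⟩
  have hzero : ((innerSL ℂ v).smulRight v) ∘L ASE e S j = 0 := by
    ext x
    rw [ASE_eq_rankOne]
    simp only [coe_comp', Function.comp_apply, smulRight_apply, innerSL_apply_apply,
      zero_apply, inner_smul_right]
    rw [hperp _ (projOp_mem S (e j))]
    simp
  rw [hzero]
  simp [diagTr]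

end Stmt17Aux

open Stmt17Aux in
/-- for orthogonal finite-dimensional subspaces `S, V` the following are
equivalent: (i) there are positive operators `X, Y` supported in `S` resp. `V` with trace
one and the same diagonal; (ii) `m_S ∩ m_V ≠ ∅`; (iii) the joint numerical ranges of
`(P_S E_i P_S)_i` and `(P_V E_i P_V)_i` intersect in more than `{0}`. -/
theorem stmt_17 (e : HilbertBasis ℕ ℂ H) (S V : Submodule ℂ H)
    [FiniteDimensional ℂ S] [FiniteDimensional ℂ V]
    (hSV : ∀ x ∈ S, ∀ y ∈ V, ⟪x, y⟫_ℂ = 0) :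
    ((∃ X Y : H →L[ℂ] H, X.IsPositive ∧ Y.IsPositive ∧
        projOp S ∘L X = X ∧ X ∘L projOp S = X ∧
        projOp V ∘L Y = Y ∧ Y ∘L projOp V = Y ∧
        diagTr e X = 1 ∧ diagTr e Y = 1 ∧ diagSeq e X = diagSeq e Y) ↔
      (momentSet e S ∩ momentSet e V).Nonempty) ∧
    ((momentSet e S ∩ momentSet e V).Nonempty ↔
      jnr e (ASE e S) ∩ jnr e (ASE e V) ≠ ({0} : Set (ℕ → ℝ))) := by
  -- (i) → (ii)
  have A : (∃ X Y : H →L[ℂ] H, X.IsPositive ∧ Y.IsPositive ∧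
        projOp S ∘L X = X ∧ X ∘L projOp S = X ∧
        projOp V ∘L Y = Y ∧ Y ∘L projOp V = Y ∧
        diagTr e X = 1 ∧ diagTr e Y = 1 ∧ diagSeq e X = diagSeq e Y) →
      (momentSet e S ∩ momentSet e V).Nonempty := by
    rintro ⟨X, Y, hX, hY, hPX, hXP, hPY, hYP, htrX, htrY, hdiag⟩
    exact ⟨diagSeq e X, ⟨X, mem_DOps_of e hX hPX hXP htrX, rfl⟩,
      ⟨Y, mem_DOps_of e hY hPY hYP htrY, hdiag.symm⟩⟩
  -- (ii) → (iii)
  have B : (momentSet e S ∩ momentSet e V).Nonempty →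
      jnr e (ASE e S) ∩ jnr e (ASE e V) ≠ ({0} : Set (ℕ → ℝ)) := by
    rintro ⟨x, ⟨X, hX, hXd⟩, ⟨Y, hY, hYd⟩⟩ h
    have hxS : x ∈ jnr e (ASE e S) := hXd ▸ mem_jnr_of_DOps e hX
    have hxV : x ∈ jnr e (ASE e V) := hYd ▸ mem_jnr_of_DOps e hY
    have hx0 : x = 0 := by
      have : x ∈ ({0} : Set (ℕ → ℝ)) := h ▸ ⟨hxS, hxV⟩
      exact this
    have h1 : diagTr e X = 1 := hX.1.2.2.2
    have h0 : diagSeq e X = 0 := hXd.trans hx0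
    rw [tsum_diagSeq, h0] at h1
    simp only [Pi.zero_apply, tsum_zero] at h1
    exact zero_ne_one h1
  -- (iii) → (i)
  have C : jnr e (ASE e S) ∩ jnr e (ASE e V) ≠ ({0} : Set (ℕ → ℝ)) →
      (∃ X Y : H →L[ℂ] H, X.IsPositive ∧ Y.IsPositive ∧
        projOp S ∘L X = X ∧ X ∘L projOp S = X ∧
        projOp V ∘L Y = Y ∧ Y ∘L projOp V = Y ∧
        diagTr e X = 1 ∧ diagTr e Y = 1 ∧ diagSeq e X = diagSeq e Y) := by
    intro hne
    obtain ⟨v, hv1, hvperp⟩ := exists_unit_perp e (S ⊔ V)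
    have h0S : (0 : ℕ → ℝ) ∈ jnr e (ASE e S) :=
      zero_mem_jnr e hv1 fun u hu => hvperp u (Submodule.mem_sup_left hu)
    have h0V : (0 : ℕ → ℝ) ∈ jnr e (ASE e V) :=
      zero_mem_jnr e hv1 fun u hu => hvperp u (Submodule.mem_sup_right hu)
    have hex : ∃ w ∈ jnr e (ASE e S) ∩ jnr e (ASE e V), w ≠ 0 := by
      by_contra hc
      push_neg at hc
      exact hne (Set.eq_singleton_iff_unique_mem.mpr ⟨⟨h0S, h0V⟩, fun w hw => hc w hw⟩)
    obtain ⟨w, ⟨⟨ρ, hρ, hρw⟩, ⟨σ, hσ, hσw⟩⟩, hw0⟩ := hex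
    have hwS : ∀ j, w j = (⟪ρ (projOp S (e j)), projOp S (e j)⟫_ℂ).re := fun j => by
      rw [hρw j, ASE_eq_rankOne, diagTr_comp_rankOne]
    have hwV : ∀ j, w j = (⟪σ (projOp V (e j)), projOp V (e j)⟫_ℂ).re := fun j => by
      rw [hσw j, ASE_eq_rankOne, diagTr_comp_rankOne]
    have hsum : Summable w := by
      have h : w = fun j => (⟪ρ (projOp S (e j)), projOp S (e j)⟫_ℂ).re := funext hwS
      rw [h]; exact summable_quad e S ρ
    have hnonneg : ∀ j, 0 ≤ w j := fun j => by
      rw [hwS j]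
      have h := hρ.2.1.2 (projOp S (e j))
      simpa [ContinuousLinearMap.reApplyInnerSelf, RCLike.re_to_complex] using h
    set c := ∑' j, w j with hc
    have hcpos : 0 < c := by
      obtain ⟨j0, hj0⟩ := Function.ne_iff.mp hw0
      exact Summable.tsum_pos hsum hnonneg j0 (lt_of_le_of_ne (hnonneg j0) (Ne.symm hj0))
    -- the two candidate operators
    set X0 := projOp S ∘L ρ ∘L projOp S with hX0
    set Y0 := projOp V ∘L σ ∘L projOp V with hY0
    have hX0pos : X0.IsPositive := by
      have h := hρ.2.1.conj_adjoint (projOp S)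
      rwa [(projOp_isSelfAdjoint S).adjoint_eq] at h
    have hY0pos : Y0.IsPositive := by
      have h := hσ.2.1.conj_adjoint (projOp V)
      rwa [(projOp_isSelfAdjoint V).adjoint_eq] at h
    have hPX0 : projOp S ∘L X0 = X0 := by
      ext x
      simp only [hX0, coe_comp', Function.comp_apply]
      rw [projOp_idem_apply]
    have hX0P : X0 ∘L projOp S = X0 := by
      ext x
      simp only [hX0, coe_comp', Function.comp_apply]
      rw [projOp_idem_apply]
    have hPY0 : projOp V ∘L Y0 = Y0 := by
      ext x
      simp only [hY0, coe_comp', Function.comp_apply]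
      rw [projOp_idem_apply]
    have hY0P : Y0 ∘L projOp V = Y0 := by
      ext x
      simp only [hY0, coe_comp', Function.comp_apply]
      rw [projOp_idem_apply]
    have hdiagX0 : ∀ i, (⟪X0 (e i), e i⟫_ℂ).re = w i := fun i => by
      rw [hwS i]
      exact congrArg Complex.re (inner_conj_proj S ρ (e i))
    have hdiagY0 : ∀ i, (⟪Y0 (e i), e i⟫_ℂ).re = w i := fun i => by
      rw [hwV i]
      exact congrArg Complex.re (inner_conj_proj V σ (e i))
    refine ⟨((c⁻¹ : ℝ) : ℂ) • X0, ((c⁻¹ : ℝ) : ℂ) • Y0,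
      isPositive_smul_real hX0pos (inv_nonneg.mpr hcpos.le),
      isPositive_smul_real hY0pos (inv_nonneg.mpr hcpos.le), ?_, ?_, ?_, ?_, ?_, ?_, ?_⟩
    · ext x
      simp only [coe_comp', Function.comp_apply, ContinuousLinearMap.smul_apply, map_smul]
      rw [show projOp S (X0 x) = X0 x from congrFun (congrArg DFunLike.coe hPX0) x]
    · ext x
      simp only [coe_comp', Function.comp_apply, ContinuousLinearMap.smul_apply]
      rw [show X0 (projOp S x) = X0 x from congrFun (congrArg DFunLike.coe hX0P) x]
    · ext x
      simp only [coe_comp', Function.comp_apply, ContinuousLinearMap.smul_apply, map_smul]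
      rw [show projOp V (Y0 x) = Y0 x from congrFun (congrArg DFunLike.coe hPY0) x]
    · ext x
      simp only [coe_comp', Function.comp_apply, ContinuousLinearMap.smul_apply]
      rw [show Y0 (projOp V x) = Y0 x from congrFun (congrArg DFunLike.coe hY0P) x]
    · rw [diagTr]
      have h : ∀ i, (⟪(((c⁻¹ : ℝ) : ℂ) • X0) (e i), e i⟫_ℂ).re = c⁻¹ * w i := by
        intro i
        rw [ContinuousLinearMap.smul_apply, inner_smul_left, Complex.conj_ofReal,
          Complex.mul_re]
        simp only [Complex.ofReal_re, Complex.ofReal_im, zero_mul, sub_zero]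
        rw [hdiagX0 i]
      simp_rw [h]
      rw [tsum_mul_left, ← hc, inv_mul_cancel₀ hcpos.ne']
    · rw [diagTr]
      have h : ∀ i, (⟪(((c⁻¹ : ℝ) : ℂ) • Y0) (e i), e i⟫_ℂ).re = c⁻¹ * w i := by
        intro i
        rw [ContinuousLinearMap.smul_apply, inner_smul_left, Complex.conj_ofReal,
          Complex.mul_re]
        simp only [Complex.ofReal_re, Complex.ofReal_im, zero_mul, sub_zero]
        rw [hdiagY0 i]
      simp_rw [h]
      rw [tsum_mul_left, ← hc, inv_mul_cancel₀ hcpos.ne']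
    · funext i
      rw [diagSeq, diagSeq]
      simp only [ContinuousLinearMap.smul_apply, inner_smul_left, Complex.conj_ofReal,
        Complex.mul_re, Complex.ofReal_re, Complex.ofReal_im, zero_mul, sub_zero]
      rw [hdiagX0 i, hdiagY0 i]
  exact ⟨⟨A, fun h => C (B h)⟩, ⟨B, fun h => A (C h)⟩⟩
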